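/- arXiv:1902.04920 — 7 statements merged into one kernel-verified Lean document; each statement's English description precedes it below -/
import Mathlib

section
/- For every ε > 0 and every x > 0, the function x ↦ ln(G_ε(x)) is differentiable at x with derivative (ln G_ε)'(x) = exp(x/ε)/(ε·(1 + exp(x/ε))·ln(1 + exp(x/ε))), and this derivative satisfies 1/((1 + exp(−x/ε))·(x + ε·ln 2)) < (ln G_ε)'(x) < 1/x. -/
/-!
Writing `σ` for the logistic sigmoid, `G_ε' = σ(x/ε)`, so `(ln G_ε)' = σ(x/ε) / G_ε(x)`.
For `x > 0` the softplus bounds `t < ln(1 + eᵗ) < t + ln 2` (`t > 0`) give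
`x < G_ε(x) < x + ε ln 2`; together with `0 < σ < 1` they yield both inequalities.
-/

/-- For `ε > 0`, the smooth approximation `G_ε(x) = ε · ln(1 + exp(x/ε))` of `max(x, 0)`. -/
noncomputable def Geps (ε x : ℝ) : ℝ := ε * Real.log (1 + Real.exp (x / ε))

/-- The first derivative of `x ↦ ln(G_ε(x))`:
`(ln G_ε)'(x) = exp(x/ε) / (ε·(1 + exp(x/ε))·ln(1 + exp(x/ε)))`. -/
noncomputable def logGepsDeriv (ε x : ℝ) : ℝ :=
  Real.exp (x / ε) / (ε * (1 + Real.exp (x / ε)) * Real.log (1 + Real.exp (x / ε)))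

open Real

lemma Real.exp_div_one_add_exp (t : ℝ) : exp t / (1 + exp t) = sigmoid t := by
  rw [sigmoid_def, exp_neg]
  field_simp
  ring

lemma Real.lt_log_one_add_exp (t : ℝ) : t < log (1 + exp t) := by
  rw [lt_log_iff_exp_lt (by positivity)]
  linarith

lemma Real.log_one_add_exp_lt {t : ℝ} (ht : 0 < t) : log (1 + exp t) < t + log 2 := by
  calc log (1 + exp t) < log (2 * exp t) :=
        log_lt_log (by positivity) (by linarith [one_lt_exp_iff.mpr ht])
    _ = t + log 2 := by rw [log_mul two_ne_zero (exp_pos t).ne', log_exp, add_comm]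

section

variable {ε : ℝ}

lemma lt_geps (hε : 0 < ε) (x : ℝ) : x < Geps ε x := by
  have := mul_lt_mul_of_pos_left (lt_log_one_add_exp (x / ε)) hε
  rwa [mul_div_cancel₀ x hε.ne'] at this

lemma geps_lt (hε : 0 < ε) {x : ℝ} (hx : 0 < x) : Geps ε x < x + ε * log 2 := by
  have := mul_lt_mul_of_pos_left (log_one_add_exp_lt (div_pos hx hε)) hε
  rwa [mul_add, mul_div_cancel₀ x hε.ne'] at this

lemma hasDerivAt_geps (hε : ε ≠ 0) (x : ℝ) : HasDerivAt (Geps ε) (sigmoid (x / ε)) x := by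
  have hexp : HasDerivAt (fun z => 1 + exp (z / ε)) (exp (x / ε) * (1 / ε)) x :=
    ((hasDerivAt_id x).div_const ε).exp.const_add 1
  refine ((hexp.log (by positivity)).const_mul ε).congr_deriv ?_
  rw [← exp_div_one_add_exp]
  field_simp

lemma logGepsDeriv_eq_sigmoid_div_geps (x : ℝ) :
    logGepsDeriv ε x = sigmoid (x / ε) / Geps ε x := by
  rw [logGepsDeriv, Geps, ← exp_div_one_add_exp, div_div]
  ring

end

/-- For every `ε > 0` and every `x > 0`, the function `x ↦ ln(G_ε(x))`
is differentiable at `x` with derivative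
`(ln G_ε)'(x) = exp(x/ε)/(ε·(1 + exp(x/ε))·ln(1 + exp(x/ε)))`, and this derivative
satisfies `1/((1 + exp(−x/ε))·(x + ε·ln 2)) < (ln G_ε)'(x) < 1/x`. -/
theorem log_geps_hasDerivAt_and_deriv_bounds_pos (ε : ℝ) (hε : 0 < ε) (x : ℝ) (hx : 0 < x) :
    HasDerivAt (fun z : ℝ => Real.log (Geps ε z)) (logGepsDeriv ε x) x ∧
      1 / ((1 + Real.exp (-x / ε)) * (x + ε * Real.log 2)) < logGepsDeriv ε x ∧
      logGepsDeriv ε x < 1 / x := by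
  have hG : 0 < Geps ε x := hx.trans (lt_geps hε x)
  rw [logGepsDeriv_eq_sigmoid_div_geps]
  refine ⟨(hasDerivAt_geps hε.ne' x).log hG.ne', ?_, ?_⟩
  · rw [neg_div, one_div, mul_inv, ← sigmoid_def, ← div_eq_mul_inv]
    exact div_lt_div_of_pos_left (sigmoid_pos _) hG (geps_lt hε hx)
  · calc sigmoid (x / ε) / Geps ε x < 1 / Geps ε x :=
          div_lt_div_of_pos_right (sigmoid_lt_one _) hG
      _ < 1 / x := one_div_lt_one_div_of_lt hx (lt_geps hε x)
end

section
/- For every ε > 0 and every x < 0: ln(G_ε(x)) < ln ε + x/ε; the derivative of x ↦ ln(G_ε(x)) at x satisfies (ln G_ε)'(x) > 1/(2ε); and the second derivative satisfies −(2/ε²)·exp(x/ε) < (ln G_ε)''(x) < 0. -/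
open Real

lemma log_one_add_lt_self {u : ℝ} (hu : 0 < u) : log (1 + u) < u := by
  linarith [log_lt_sub_one_of_pos (by linarith : 0 < 1 + u) (by linarith : 1 + u ≠ 1)]

lemma div_one_add_le_log_one_add {u : ℝ} (hu : 0 ≤ u) : u / (1 + u) ≤ log (1 + u) := by
  have h := one_sub_inv_le_log_of_pos (by linarith : 0 < 1 + u)
  convert h using 1
  field_simp
  ring

lemma log_one_add_exp_pos (t : ℝ) : 0 < log (1 + exp t) :=
  log_pos (lt_add_of_pos_right 1 (exp_pos t))

lemma hasDerivAt_exp_div (ε x : ℝ) : HasDerivAt (fun z => exp (z / ε)) (exp (x / ε) / ε) x := by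
  simpa [div_eq_mul_inv] using ((hasDerivAt_id x).div_const ε).exp

section
variable {ε : ℝ}

lemma Geps_pos (hε : 0 < ε) (x : ℝ) : 0 < Geps ε x :=
  mul_pos hε (log_one_add_exp_pos _)

lemma hasDerivAt_Geps (hε : ε ≠ 0) (x : ℝ) :
    HasDerivAt (Geps ε) (exp (x / ε) / (1 + exp (x / ε))) x := by
  have h := (((hasDerivAt_exp_div ε x).const_add 1).log (by positivity)).const_mul ε
  exact h.congr_deriv (by field_simp)

lemma hasDerivAt_log_Geps (hε : 0 < ε) (x : ℝ) :
    HasDerivAt (fun z => log (Geps ε z))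
      (exp (x / ε) / (ε * (1 + exp (x / ε)) * log (1 + exp (x / ε)))) x := by
  convert (hasDerivAt_Geps hε.ne' x).log (Geps_pos hε x).ne' using 1
  rw [Geps]
  field_simp

lemma hasDerivAt_deriv_log_Geps (hε : 0 < ε) (x : ℝ) :
    HasDerivAt (deriv fun z => log (Geps ε z))
      (exp (x / ε) * (log (1 + exp (x / ε)) - exp (x / ε)) /
        (ε ^ 2 * (1 + exp (x / ε)) ^ 2 * log (1 + exp (x / ε)) ^ 2)) x := by
  have hderiv : (deriv fun z => log (Geps ε z)) =
      fun z => exp (z / ε) / (ε * (1 + exp (z / ε)) * log (1 + exp (z / ε))) :=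
    funext fun z => (hasDerivAt_log_Geps hε z).deriv
  have hL := log_one_add_exp_pos (x / ε)
  have hu := hasDerivAt_exp_div ε x
  have h1u := hu.const_add 1
  have hden : HasDerivAt (fun z => ε * (1 + exp (z / ε)) * log (1 + exp (z / ε))) _ x :=
    (h1u.const_mul ε).mul (h1u.log (by positivity))
  rw [hderiv]
  have hne : ε * (1 + exp (x / ε)) * log (1 + exp (x / ε)) ≠ 0 := by positivity
  refine (hu.div hden hne).congr_deriv ?_
  field_simp
  ring

lemma log_Geps_lt (hε : 0 < ε) (x : ℝ) : log (Geps ε x) < log ε + x / ε := by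
  have hL := log_one_add_exp_pos (x / ε)
  rw [Geps, log_mul hε.ne' hL.ne', add_lt_add_iff_left]
  exact (log_lt_log hL (log_one_add_lt_self (exp_pos _))).trans_eq (log_exp _)

lemma one_div_two_mul_lt_deriv_log_Geps (hε : 0 < ε) {x : ℝ} (hx : x < 0) :
    1 / (2 * ε) < deriv (fun z => log (Geps ε z)) x := by
  rw [(hasDerivAt_log_Geps hε x).deriv]
  have hL := log_one_add_exp_pos (x / ε)
  set u := exp (x / ε)
  have hu : 0 < u := exp_pos _
  have hu1 : u < 1 := exp_lt_one_iff.2 (div_neg_of_neg_of_pos hx hε)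
  have key : (1 + u) * log (1 + u) < 2 * u :=
    calc (1 + u) * log (1 + u) < (1 + u) * u :=
          mul_lt_mul_of_pos_left (log_one_add_lt_self hu) (by positivity)
      _ < 2 * u := by nlinarith
  rw [div_lt_div_iff₀ (by positivity) (by positivity)]
  nlinarith

lemma deriv_deriv_log_Geps_neg (hε : 0 < ε) (x : ℝ) :
    deriv (deriv fun z => log (Geps ε z)) x < 0 := by
  have hu := exp_pos (x / ε)
  have hL := log_one_add_exp_pos (x / ε)
  rw [(hasDerivAt_deriv_log_Geps hε x).deriv]
  exact div_neg_of_neg_of_pos (mul_neg_of_pos_of_neg hu (sub_neg.2 (log_one_add_lt_self hu)))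
    (by positivity)

lemma neg_two_div_sq_mul_exp_lt_deriv_deriv_log_Geps (hε : 0 < ε) (x : ℝ) :
    -(2 / ε ^ 2) * exp (x / ε) < deriv (deriv fun z => log (Geps ε z)) x := by
  rw [(hasDerivAt_deriv_log_Geps hε x).deriv]
  have hL := log_one_add_exp_pos (x / ε)
  set u := exp (x / ε)
  set L := log (1 + u)
  have hu : 0 < u := exp_pos _
  have hLu : L < u := log_one_add_lt_self hu
  have huL : u ≤ (1 + u) * L := (div_le_iff₀' (by positivity)).1 (div_one_add_le_log_one_add hu.le)
  have key : u - L < 2 * ((1 + u) * L) ^ 2 :=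
    calc u - L ≤ u * L := by linarith
      _ < u ^ 2 := by nlinarith
      _ ≤ ((1 + u) * L) ^ 2 := pow_le_pow_left₀ hu.le huL 2
      _ < 2 * ((1 + u) * L) ^ 2 := by nlinarith
  calc -(2 / ε ^ 2) * u = u * -(2 * ((1 + u) * L) ^ 2) / (ε ^ 2 * (1 + u) ^ 2 * L ^ 2) := by
        field_simp
    _ < u * (L - u) / (ε ^ 2 * (1 + u) ^ 2 * L ^ 2) := by gcongr; linarith

end

/-- For every `ε > 0` and every `x < 0`: `ln(G_ε(x)) < ln ε + x/ε`;
the derivative of `x ↦ ln(G_ε(x))` at `x` satisfies `(ln G_ε)'(x) > 1/(2ε)`; and the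
second derivative satisfies `−(2/ε²)·exp(x/ε) < (ln G_ε)''(x) < 0`. -/
theorem log_geps_bounds_neg (ε : ℝ) (hε : 0 < ε) (x : ℝ) (hx : x < 0) :
    Real.log (Geps ε x) < Real.log ε + x / ε ∧
      1 / (2 * ε) < deriv (fun z : ℝ => Real.log (Geps ε z)) x ∧
      -(2 / ε ^ 2) * Real.exp (x / ε) < deriv (deriv (fun z : ℝ => Real.log (Geps ε z))) x ∧
      deriv (deriv (fun z : ℝ => Real.log (Geps ε z))) x < 0 :=
  ⟨log_Geps_lt hε x, one_div_two_mul_lt_deriv_log_Geps hε hx,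
    neg_two_div_sq_mul_exp_lt_deriv_deriv_log_Geps hε x, deriv_deriv_log_Geps_neg hε x⟩
end

section
/- For every ε > 0, the second derivative of x ↦ ln(G_ε(x)) is strictly negative at every real x; consequently, the function x ↦ −ln(G_ε(x)) is strictly convex on ℝ. -/
section aux

variable {ε : ℝ} (hε : 0 < ε)

private lemma E_deriv (x : ℝ) :
    HasDerivAt (fun z : ℝ => Real.exp (z / ε)) (Real.exp (x / ε) * (1 / ε)) x := by
  exact ((hasDerivAt_id x).div_const ε).exp

private lemma onE_pos (x : ℝ) : (0:ℝ) < 1 + Real.exp (x / ε) := by positivity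

private lemma L_pos (x : ℝ) : 0 < Real.log (1 + Real.exp (x / ε)) :=
  Real.log_pos (by nlinarith [Real.exp_pos (x / ε)])

include hε

private lemma log_geps_deriv (x : ℝ) :
    HasDerivAt (fun z : ℝ => Real.log (Geps ε z))
      (Real.exp (x / ε) / (ε * (1 + Real.exp (x / ε)) *
        Real.log (1 + Real.exp (x / ε)))) x := by
  set E := fun z : ℝ => Real.exp (z / ε)
  have hE := E_deriv (ε := ε) x
  have hEpos : 0 < E x := Real.exp_pos _
  have h1 : HasDerivAt (fun z => 1 + E z) (E x * (1 / ε)) x := (hE).const_add 1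
  have hL : HasDerivAt (fun z => Real.log (1 + E z))
      ((E x * (1 / ε)) / (1 + E x)) x := h1.log (onE_pos x).ne'
  have hG : HasDerivAt (fun z => Geps ε z)
      (ε * ((E x * (1 / ε)) / (1 + E x))) x := hL.const_mul ε
  have hGpos : 0 < Geps ε x :=
    mul_pos hε (L_pos x)
  have := hG.log hGpos.ne'
  convert this using 1
  have hEx : E x = Real.exp (x / ε) := rfl
  unfold Geps
  rw [hEx]
  have h1' : (1:ℝ) + Real.exp (x / ε) ≠ 0 := (onE_pos (ε := ε) x).ne'
  have h2' : Real.log (1 + Real.exp (x / ε)) ≠ 0 := (L_pos (ε := ε) x).ne'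
  field_simp

private lemma key (x : ℝ) :
    HasDerivAt (fun z : ℝ => Real.exp (z / ε) / (ε * (1 + Real.exp (z / ε)) *
        Real.log (1 + Real.exp (z / ε))))
      ((Real.exp (x / ε) * (1 / ε) * (ε * (1 + Real.exp (x / ε)) *
          Real.log (1 + Real.exp (x / ε))) -
        Real.exp (x / ε) * (ε * (Real.exp (x / ε) * (1 / ε)) *
            Real.log (1 + Real.exp (x / ε)) +
          ε * (1 + Real.exp (x / ε)) * ((Real.exp (x / ε) * (1 / ε)) / (1 + Real.exp (x / ε))))) /
        (ε * (1 + Real.exp (x / ε)) * Real.log (1 + Real.exp (x / ε))) ^ 2) x := by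
  have hE := E_deriv (ε := ε) x
  have h1 : HasDerivAt (fun z => 1 + Real.exp (z / ε)) (Real.exp (x / ε) * (1 / ε)) x :=
    hE.const_add 1
  have hL : HasDerivAt (fun z => Real.log (1 + Real.exp (z / ε)))
      ((Real.exp (x / ε) * (1 / ε)) / (1 + Real.exp (x / ε))) x := h1.log (onE_pos x).ne'
  have hD : HasDerivAt (fun z => ε * (1 + Real.exp (z / ε)) *
      Real.log (1 + Real.exp (z / ε)))
      (ε * (Real.exp (x / ε) * (1 / ε)) * Real.log (1 + Real.exp (x / ε)) +
        ε * (1 + Real.exp (x / ε)) * ((Real.exp (x / ε) * (1 / ε)) / (1 + Real.exp (x / ε)))) x :=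
    (h1.const_mul ε).mul hL
  have hDne : ε * (1 + Real.exp (x / ε)) * Real.log (1 + Real.exp (x / ε)) ≠ 0 :=
    (mul_pos (mul_pos hε (onE_pos x)) (L_pos x)).ne'
  exact hE.div hD hDne

end aux

/-- For every `ε > 0`, the second derivative of `x ↦ ln(G_ε(x))` is
strictly negative at every real `x`; consequently, the function `x ↦ −ln(G_ε(x))` is
strictly convex on `ℝ`. -/
theorem neg_log_geps_strictly_convex (ε : ℝ) (hε : 0 < ε) :
    (∀ x : ℝ, deriv (deriv (fun z : ℝ => Real.log (Geps ε z))) x < 0) ∧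
      StrictConvexOn ℝ Set.univ (fun z : ℝ => -Real.log (Geps ε z)) := by
  have hd1 : deriv (fun z : ℝ => Real.log (Geps ε z)) =
      fun z : ℝ => Real.exp (z / ε) / (ε * (1 + Real.exp (z / ε)) *
        Real.log (1 + Real.exp (z / ε))) := by
    funext z
    exact (log_geps_deriv hε z).deriv
  have hneg : ∀ x : ℝ, deriv (deriv (fun z : ℝ => Real.log (Geps ε z))) x < 0 := by
    intro x
    rw [hd1, (key hε x).deriv]
    set E := Real.exp (x / ε)
    set L := Real.log (1 + E)
    have hEpos : 0 < E := Real.exp_pos _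
    have hLpos : 0 < L := L_pos x
    have h1E : (0:ℝ) < 1 + E := onE_pos x
    have hLE : L < E := by
      have := Real.log_lt_sub_one_of_pos h1E (by nlinarith)
      linarith
    apply div_neg_of_neg_of_pos
    · have : E * (1 / ε) * (ε * (1 + E) * L) -
          E * (ε * (E * (1 / ε)) * L + ε * (1 + E) * (E * (1 / ε) / (1 + E))) =
          E * (L - E) := by
        field_simp
        ring
      rw [this]
      exact mul_neg_of_pos_of_neg hEpos (by linarith)
    · positivity
  constructor
  · exact hneg
  · apply strictConvexOn_univ_of_deriv2_pos
    · have : Continuous (fun z : ℝ => Real.log (Geps ε z)) := by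
        apply continuous_iff_continuousAt.2
        intro x
        exact (log_geps_deriv hε x).continuousAt
      exact this.neg
    · intro x
      show (0:ℝ) < deriv (deriv (fun z : ℝ => -Real.log (Geps ε z))) x
      have h2 : deriv (fun z : ℝ => -Real.log (Geps ε z)) =
          fun z => -(deriv (fun w : ℝ => Real.log (Geps ε w)) z) := by
        funext z; exact deriv.neg
      rw [h2]
      have h3 : deriv (fun z : ℝ => -(deriv (fun w : ℝ => Real.log (Geps ε w)) z)) x =
          -(deriv (deriv (fun w : ℝ => Real.log (Geps ε w))) x) := deriv.neg
      rw [h3]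
      linarith [hneg x]
end

section
/- Assume the domain D is nonempty. Then the negative log-likelihood f is strictly convex on D if and only if, for every channel i with 1 ≤ i ≤ K, the columns Φ_{i,1}, …, Φ_{i,N_i} of the matrix Φ_i are linearly independent vectors in ℝ^{M_i}. -/
open Finset

/-- Assume the domain `D` is nonempty. Then the negative log-likelihood
`f` is strictly convex on `D` if and only if, for every channel `i`, the columns of the
matrix `Φ_i` (the basis functions `φ_j`, `j ∈ I_i`, evaluated at the states just before
each activation of channel `i`) are linearly independent. -/
theorem strict_convexity_iff_columns_linearIndependent
    (N K M : ℕ) (hN : 1 ≤ N) (hK : 1 ≤ K) (hM : 1 ≤ M)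
    (X : Type*) (φ : Fin N → X → ℝ)
    (I : Fin K → Finset (Fin N))
    (hpart : ∀ j : Fin N, ∃! i : Fin K, j ∈ I i)
    (y : Fin (M + 1) → X) (t : Fin (M + 1) → ℝ) (ht : ∀ l, 0 < t l)
    (chan : Fin M → Fin K)
    (D : Set (Fin N → ℝ))
    (hD : D = {ω : Fin N → ℝ |
      ∀ l : Fin M, 0 < ∑ j ∈ I (chan l), ω j * φ j (y l.castSucc)})
    (f : (Fin N → ℝ) → ℝ)
    (hf : ∀ ω : Fin N → ℝ, f ω =
      -(∑ l : Fin M, Real.log (∑ j ∈ I (chan l), ω j * φ j (y l.castSucc)))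
        + ∑ l : Fin (M + 1), t l * ∑ j : Fin N, ω j * φ j (y l))
    (hne : D.Nonempty) :
    StrictConvexOn ℝ D f ↔
      ∀ i : Fin K, LinearIndependent ℝ
        (fun j : (I i : Finset (Fin N)) =>
          fun l : {l : Fin M // chan l = i} => φ j.1 (y l.1.castSucc)) := by
  classical
  set s : Fin M → (Fin N → ℝ) → ℝ :=
    fun l ω => ∑ j ∈ I (chan l), ω j * φ j (y l.castSucc) with hsdef
  set lin : (Fin N → ℝ) → ℝ :=
    fun ω => ∑ l : Fin (M + 1), t l * ∑ j : Fin N, ω j * φ j (y l) with hlindef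
  have hD' : D = {ω : Fin N → ℝ | ∀ l : Fin M, 0 < s l ω} := hD
  have hf' : ∀ ω, f ω = -(∑ l : Fin M, Real.log (s l ω)) + lin ω := hf
  have slin : ∀ (l : Fin M) (a b : ℝ) (u v : Fin N → ℝ),
      s l (a • u + b • v) = a * s l u + b * s l v := by
    intro l a b u v
    simp only [hsdef, Pi.add_apply, Pi.smul_apply, smul_eq_mul, add_mul,
      Finset.sum_add_distrib, Finset.mul_sum, mul_assoc]
  have sadd : ∀ (l : Fin M) (u v : Fin N → ℝ), s l (u + v) = s l u + s l v := by
    intro l u v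
    have := slin l 1 1 u v
    simpa using this
  have linlin : ∀ (a b : ℝ) (u v : Fin N → ℝ),
      lin (a • u + b • v) = a * lin u + b * lin v := by
    intro a b u v
    simp only [hlindef, Pi.add_apply, Pi.smul_apply, smul_eq_mul, add_mul,
      Finset.sum_add_distrib, Finset.mul_sum, mul_add, mul_assoc, mul_left_comm]
  -- the key injectivity condition
  have main : StrictConvexOn ℝ D f ↔
      (∀ v : Fin N → ℝ, (∀ l : Fin M, s l v = 0) → v = 0) := by
    constructor
    · -- strictly convex → injective
      intro hsc v hv
      by_contra hvne
      obtain ⟨ω, hω⟩ := hne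
      rw [hD'] at hω
      have hω' : ω + v ∈ D := by
        rw [hD']
        intro l
        rw [sadd, hv l, add_zero]
        exact hω l
      have hωD : ω ∈ D := by rw [hD']; exact hω
      have hneq : ω ≠ ω + v := fun h => hvne (left_eq_add.mp h)
      have hlt := hsc.2 hωD hω' hneq (by norm_num : (0:ℝ) < 1/2)
        (by norm_num : (0:ℝ) < 1/2) (by norm_num : (1/2:ℝ) + 1/2 = 1)
      have hmid : ∀ l : Fin M, s l ((1/2 : ℝ) • ω + (1/2 : ℝ) • (ω + v)) = s l ω := by
        intro l
        rw [slin, sadd, hv l]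
        ring
      have hfeq : f ((1/2 : ℝ) • ω + (1/2 : ℝ) • (ω + v))
          = (1/2 : ℝ) * f ω + (1/2 : ℝ) * f (ω + v) := by
        rw [hf', hf', hf', linlin]
        have h1 : ∀ l : Fin M, Real.log (s l ((1/2 : ℝ) • ω + (1/2 : ℝ) • (ω + v)))
            = Real.log (s l ω) := fun l => by rw [hmid l]
        have h2 : ∀ l : Fin M, Real.log (s l (ω + v)) = Real.log (s l ω) := fun l => by
          rw [sadd, hv l, add_zero]
        rw [Finset.sum_congr rfl (fun l _ => h1 l)]
        rw [Finset.sum_congr rfl (fun l _ => h2 l)]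
        ring
      rw [hfeq] at hlt
      simp only [smul_eq_mul] at hlt
      exact lt_irrefl _ hlt
    · -- injective → strictly convex
      intro hinj
      constructor
      · -- convexity of D
        intro u hu w hw a b ha hb hab
        rw [hD'] at hu hw ⊢
        intro l
        rw [slin]
        rcases eq_or_lt_of_le ha with ha0 | ha0
        · have hb1 : b = 1 := by linarith
          rw [← ha0, hb1]; simpa using hw l
        · rcases eq_or_lt_of_le hb with hb0 | hb0
          · have ha1 : a = 1 := by linarith
            rw [← hb0, ha1]; simpa using hu l
          · exact add_pos (mul_pos ha0 (hu l)) (mul_pos hb0 (hw l))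
      · intro u hu w hw huw a b ha hb hab
        rw [hD'] at hu hw
        -- there is some l where s l u ≠ s l w
        have hex : ∃ l : Fin M, s l u ≠ s l w := by
          by_contra hc
          push_neg at hc
          apply huw
          have : u - w = 0 := by
            apply hinj
            intro l
            have : s l ((1 : ℝ) • u + (-1 : ℝ) • w) = 1 * s l u + (-1) * s l w :=
              slin l 1 (-1) u w
            have h2 : s l (u - w) = s l u - s l w := by
              simpa [sub_eq_add_neg, neg_smul] using this
            rw [h2, hc l, sub_self]
          have := sub_eq_zero.mp this
          exact this
        obtain ⟨l₀, hl₀⟩ := hex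
        have key : ∀ l : Fin M,
            a * Real.log (s l u) + b * Real.log (s l w)
              ≤ Real.log (s l (a • u + b • w)) := by
          intro l
          rw [slin]
          have := strictConcaveOn_log_Ioi.concaveOn.2
            (Set.mem_Ioi.mpr (hu l)) (Set.mem_Ioi.mpr (hw l)) ha.le hb.le hab
          simpa [smul_eq_mul] using this
        have key₀ : a * Real.log (s l₀ u) + b * Real.log (s l₀ w)
            < Real.log (s l₀ (a • u + b • w)) := by
          rw [slin]
          have := strictConcaveOn_log_Ioi.2
            (Set.mem_Ioi.mpr (hu l₀)) (Set.mem_Ioi.mpr (hw l₀)) hl₀ ha hb hab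
          simpa [smul_eq_mul] using this
        have hsum : ∑ l : Fin M, (a * Real.log (s l u) + b * Real.log (s l w))
            < ∑ l : Fin M, Real.log (s l (a • u + b • w)) :=
          Finset.sum_lt_sum (fun l _ => key l) ⟨l₀, Finset.mem_univ _, key₀⟩
        rw [hf', hf', hf', linlin]
        have hexp : ∑ l : Fin M, (a * Real.log (s l u) + b * Real.log (s l w))
            = a * ∑ l : Fin M, Real.log (s l u) + b * ∑ l : Fin M, Real.log (s l w) := by
          rw [Finset.sum_add_distrib, Finset.mul_sum, Finset.mul_sum]
        rw [hexp] at hsum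
        simp only [smul_eq_mul]
        linarith
  rw [main]
  -- injectivity ↔ linear independence per channel
  constructor
  · intro hinj i
    rw [Fintype.linearIndependent_iff]
    intro g hg j
    set v : Fin N → ℝ := fun j' => if h : j' ∈ I i then g ⟨j', h⟩ else 0 with hvdef
    have hv : ∀ l : Fin M, s l v = 0 := by
      intro l
      by_cases hc : chan l = i
      · have hgl := congrFun hg ⟨l, hc⟩
        simp only [Finset.sum_apply, Pi.smul_apply, smul_eq_mul, Pi.zero_apply] at hgl
        rw [hsdef]
        simp only
        rw [hc]
        rw [← Finset.sum_coe_sort (I i) (fun j' => v j' * φ j' (y l.castSucc))]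
        rw [← hgl]
        apply Finset.sum_congr rfl
        intro j' _
        simp [hvdef, j'.2]
      · rw [hsdef]
        simp only
        apply Finset.sum_eq_zero
        intro j' hj'
        have : j' ∉ I i := by
          intro hj2
          obtain ⟨i', hi', huniq⟩ := hpart j'
          exact hc ((huniq _ hj').trans (huniq _ hj2).symm)
        simp [hvdef, this]
    have hv0 := hinj v hv
    simpa [hvdef, j.2] using congrFun hv0 j.1
  · intro hli v hv
    funext j
    obtain ⟨i, hji, _⟩ := hpart j
    have hLI := (Fintype.linearIndependent_iff.mp (hli i)) (fun j' => v j'.1)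
    have hzero : ∑ j' : (I i : Finset (Fin N)), v j'.1 •
        (fun l : {l : Fin M // chan l = i} => φ j'.1 (y l.1.castSucc)) = 0 := by
      funext l
      simp only [Finset.sum_apply, Pi.smul_apply, smul_eq_mul, Pi.zero_apply]
      have := hv l.1
      rw [hsdef] at this
      simp only at this
      rw [l.2] at this
      rw [Finset.sum_coe_sort (I i) (fun j' => v j' * φ j' (y l.1.castSucc))]
      exact this
    have := hLI hzero ⟨j, hji⟩
    simpa using this
end

section
/- Suppose ω ∈ D satisfies the Euler–Lagrange equations M_j(ω) = 0 for all 1 ≤ j ≤ N, and suppose η ∈ ℝ^N is a vector supported on I_i for some channel i (i.e., η_j = 0 for j ∉ I_i) such that Σ_{j∈I_i} η_j φ_j(y_{l^{(i)}_k}) = 0 for every 1 ≤ k ≤ M_i. Then ω + η ∈ D, the vector ω + η also satisfies M_j(ω + η) = 0 for all j, and f(ω + η) = f(ω). -/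
open Finset

/-- Suppose `ω ∈ D` satisfies the Euler–Lagrange equations
`M_j(ω) = 0` for all `j`, and `η` is supported on a single channel index set `I_{i₀}`
with `Σ_{j∈I_{i₀}} η_j φ_j(y_{l}) = 0` at every activation state of channel `i₀`. Then
`ω + η ∈ D`, `ω + η` also satisfies the Euler–Lagrange equations, and
`f(ω + η) = f(ω)`. -/
theorem euler_lagrange_invariance_under_kernel_shift
    (N K M : ℕ) (hN : 1 ≤ N) (hK : 1 ≤ K) (hM : 1 ≤ M)
    (X : Type*) (φ : Fin N → X → ℝ)
    (I : Fin K → Finset (Fin N))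
    (hpart : ∀ j : Fin N, ∃! i : Fin K, j ∈ I i)
    (y : Fin (M + 1) → X) (t : Fin (M + 1) → ℝ) (ht : ∀ l, 0 < t l)
    (chan : Fin M → Fin K)
    (D : Set (Fin N → ℝ))
    (hD : D = {ω : Fin N → ℝ |
      ∀ l : Fin M, 0 < ∑ j ∈ I (chan l), ω j * φ j (y l.castSucc)})
    (f : (Fin N → ℝ) → ℝ)
    (hf : ∀ ω : Fin N → ℝ, f ω =
      -(∑ l : Fin M, Real.log (∑ j ∈ I (chan l), ω j * φ j (y l.castSucc)))
        + ∑ l : Fin (M + 1), t l * ∑ j : Fin N, ω j * φ j (y l))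
    -- the Euler–Lagrange expression `M_j(ω)` for `j ∈ I_i`
    (EL : (Fin N → ℝ) → Fin K → Fin N → ℝ)
    (hELdef : ∀ (ω : Fin N → ℝ) (i : Fin K) (j : Fin N), EL ω i j =
      -(∑ l ∈ univ.filter (fun l : Fin M => chan l = i),
          φ j (y l.castSucc) / (∑ j' ∈ I i, ω j' * φ j' (y l.castSucc)))
        + ∑ l : Fin (M + 1), t l * φ j (y l))
    (ω η : Fin N → ℝ) (i₀ : Fin K)
    (hω : ω ∈ D)
    (hEL : ∀ i : Fin K, ∀ j ∈ I i, EL ω i j = 0)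
    (hsupp : ∀ j : Fin N, j ∉ I i₀ → η j = 0)
    (hker : ∀ l : Fin M, chan l = i₀ →
      ∑ j ∈ I i₀, η j * φ j (y l.castSucc) = 0) :
    ω + η ∈ D ∧ (∀ i : Fin K, ∀ j ∈ I i, EL (ω + η) i j = 0) ∧ f (ω + η) = f ω := by
  -- The key: all channel sums are unchanged
  have hsum : ∀ l : Fin M,
      ∑ j ∈ I (chan l), (ω + η) j * φ j (y l.castSucc)
        = ∑ j ∈ I (chan l), ω j * φ j (y l.castSucc) := by
    intro l
    have hsplit : ∑ j ∈ I (chan l), (ω + η) j * φ j (y l.castSucc)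
        = (∑ j ∈ I (chan l), ω j * φ j (y l.castSucc))
          + ∑ j ∈ I (chan l), η j * φ j (y l.castSucc) := by
      rw [← Finset.sum_add_distrib]
      exact Finset.sum_congr rfl (fun j _ => by simp [add_mul])
    by_cases hc : chan l = i₀
    · rw [hsplit]
      have := hker l hc
      rw [hc] at *
      rw [this, add_zero]
    · rw [hsplit]
      have hz : ∑ j ∈ I (chan l), η j * φ j (y l.castSucc) = 0 := by
        apply Finset.sum_eq_zero
        intro j hj
        have hji : j ∉ I i₀ := by
          intro hj0
          obtain ⟨i, _, huniq⟩ := hpart j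
          exact hc ((huniq _ hj).trans (huniq _ hj0).symm)
        rw [hsupp j hji, zero_mul]
      rw [hz, add_zero]
  rw [hD] at hω ⊢
  have hmem : ∀ l : Fin M,
      0 < ∑ j ∈ I (chan l), (ω + η) j * φ j (y l.castSucc) := by
    intro l; rw [hsum l]; exact hω l
  refine ⟨hmem, ?_, ?_⟩
  · -- EL unchanged: its ω-dependence is only through channel sums
    intro i j hj
    rw [hELdef]
    have := hEL i j hj
    rw [hELdef] at this
    rw [← this]
    congr 1
    rw [neg_inj]
    apply Finset.sum_congr rfl
    intro l hl
    have hcl : chan l = i := (Finset.mem_filter.mp hl).2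
    congr 1
    rw [← hcl]
    exact hsum l
  · -- f unchanged
    rw [hf, hf]
    have hlog : ∀ l : Fin M,
        Real.log (∑ j ∈ I (chan l), (ω + η) j * φ j (y l.castSucc))
          = Real.log (∑ j ∈ I (chan l), ω j * φ j (y l.castSucc)) := by
      intro l; rw [hsum l]
    rw [Finset.sum_congr rfl (fun l _ => hlog l)]
    congr 1
    -- remains: the linear term
    have hfull : ∀ l : Fin (M+1),
        ∑ j : Fin N, (ω + η) j * φ j (y l)
          = (∑ j : Fin N, ω j * φ j (y l)) + ∑ j ∈ I i₀, η j * φ j (y l) := by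
      intro l
      have h1 : ∑ j : Fin N, (ω + η) j * φ j (y l)
          = (∑ j : Fin N, ω j * φ j (y l)) + ∑ j : Fin N, η j * φ j (y l) := by
        rw [← Finset.sum_add_distrib]
        exact Finset.sum_congr rfl (fun j _ => by simp [add_mul])
      rw [h1]
      congr 1
      symm
      apply Finset.sum_subset (Finset.subset_univ _)
      intro j _ hj
      rw [hsupp j hj, zero_mul]
    have hswap : ∑ l : Fin (M+1), t l * ∑ j ∈ I i₀, η j * φ j (y l)
        = ∑ j ∈ I i₀, η j * ∑ l : Fin (M+1), t l * φ j (y l) := by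
      calc ∑ l : Fin (M+1), t l * ∑ j ∈ I i₀, η j * φ j (y l)
          = ∑ l : Fin (M+1), ∑ j ∈ I i₀, η j * (t l * φ j (y l)) := by
            refine Finset.sum_congr rfl fun l _ => ?_
            rw [Finset.mul_sum]
            exact Finset.sum_congr rfl fun j _ => by ring
        _ = ∑ j ∈ I i₀, ∑ l : Fin (M+1), η j * (t l * φ j (y l)) := Finset.sum_comm
        _ = ∑ j ∈ I i₀, η j * ∑ l : Fin (M+1), t l * φ j (y l) :=
            Finset.sum_congr rfl fun j _ => (Finset.mul_sum ..).symm
    have hzero : ∑ j ∈ I i₀, η j * ∑ l : Fin (M+1), t l * φ j (y l) = 0 := by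
      have hELj : ∀ j ∈ I i₀, ∑ l : Fin (M+1), t l * φ j (y l)
          = ∑ l ∈ univ.filter (fun l : Fin M => chan l = i₀),
              φ j (y l.castSucc) / (∑ j' ∈ I i₀, ω j' * φ j' (y l.castSucc)) := by
        intro j hj
        have := hEL i₀ j hj
        rw [hELdef] at this
        linarith
      rw [Finset.sum_congr rfl (fun j hj => by rw [hELj j hj])]
      rw [Finset.sum_congr rfl (fun j (hj : j ∈ I i₀) => Finset.mul_sum ..)]
      rw [Finset.sum_comm]
      apply Finset.sum_eq_zero
      intro l hl
      have hcl : chan l = i₀ := (Finset.mem_filter.mp hl).2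
      have : ∑ j ∈ I i₀, η j * (φ j (y l.castSucc)
          / ∑ j' ∈ I i₀, ω j' * φ j' (y l.castSucc))
          = (∑ j ∈ I i₀, η j * φ j (y l.castSucc))
            / ∑ j' ∈ I i₀, ω j' * φ j' (y l.castSucc) := by
        rw [Finset.sum_div]
        exact Finset.sum_congr rfl (fun j _ => by ring)
      rw [this, hker l hcl, zero_div]
    calc ∑ l : Fin (M+1), t l * ∑ j : Fin N, (ω + η) j * φ j (y l)
        = ∑ l : Fin (M+1), (t l * ∑ j : Fin N, ω j * φ j (y l)
            + t l * ∑ j ∈ I i₀, η j * φ j (y l)) := by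
          apply Finset.sum_congr rfl
          intro l _
          rw [hfull l, mul_add]
      _ = (∑ l : Fin (M+1), t l * ∑ j : Fin N, ω j * φ j (y l))
            + ∑ l : Fin (M+1), t l * ∑ j ∈ I i₀, η j * φ j (y l) := by
          rw [Finset.sum_add_distrib]
      _ = ∑ l : Fin (M+1), t l * ∑ j : Fin N, ω j * φ j (y l) := by
          rw [hswap, hzero, add_zero]
end

section
/- If ω ∈ D satisfies the Euler–Lagrange equations M_j(ω) = 0 for every 1 ≤ j ≤ N, then Σ_{l=0}^M t_l·(Σ_{j=1}^N ω_j φ_j(y_l)) = M, where M = Σ_{i=1}^K M_i is the total number of recorded reactions. -/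
open Finset

/-- If `ω ∈ D` satisfies the Euler–Lagrange equations `M_j(ω) = 0` for
every `j`, then `Σ_{l=0}^M t_l·(Σ_{j=1}^N ω_j φ_j(y_l)) = M`, the total number of
recorded reactions. -/
theorem euler_lagrange_implies_total_intensity_eq_count
    (N K M : ℕ) (hN : 1 ≤ N) (hK : 1 ≤ K) (hM : 1 ≤ M)
    (X : Type*) (φ : Fin N → X → ℝ)
    (I : Fin K → Finset (Fin N))
    (hpart : ∀ j : Fin N, ∃! i : Fin K, j ∈ I i)
    (y : Fin (M + 1) → X) (t : Fin (M + 1) → ℝ) (ht : ∀ l, 0 < t l)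
    (chan : Fin M → Fin K)
    (D : Set (Fin N → ℝ))
    (hD : D = {ω : Fin N → ℝ |
      ∀ l : Fin M, 0 < ∑ j ∈ I (chan l), ω j * φ j (y l.castSucc)})
    -- the Euler–Lagrange expression `M_j(ω)` for `j ∈ I_i`
    (EL : (Fin N → ℝ) → Fin K → Fin N → ℝ)
    (hELdef : ∀ (ω : Fin N → ℝ) (i : Fin K) (j : Fin N), EL ω i j =
      -(∑ l ∈ univ.filter (fun l : Fin M => chan l = i),
          φ j (y l.castSucc) / (∑ j' ∈ I i, ω j' * φ j' (y l.castSucc)))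
        + ∑ l : Fin (M + 1), t l * φ j (y l))
    (ω : Fin N → ℝ)
    (hω : ω ∈ D)
    (hEL : ∀ i : Fin K, ∀ j ∈ I i, EL ω i j = 0) :
    ∑ l : Fin (M + 1), t l * ∑ j : Fin N, ω j * φ j (y l) = (M : ℝ) := by
  classical
  subst hD
  simp only [Set.mem_setOf_eq] at hω
  choose σ hmem huniq using hpart
  have key : ∀ i : Fin K,
      ∑ j ∈ I i, ω j * ∑ l : Fin (M+1), t l * φ j (y l)
        = ((univ.filter (fun l : Fin M => chan l = i)).card : ℝ) := by
    intro i
    have h1 : ∀ j ∈ I i, ∑ l : Fin (M+1), t l * φ j (y l)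
        = ∑ l ∈ univ.filter (fun l : Fin M => chan l = i),
            φ j (y l.castSucc) / (∑ j' ∈ I i, ω j' * φ j' (y l.castSucc)) := by
      intro j hj
      have h := hEL i j hj
      rw [hELdef] at h
      linarith
    calc ∑ j ∈ I i, ω j * ∑ l : Fin (M+1), t l * φ j (y l)
        = ∑ j ∈ I i, ∑ l ∈ univ.filter (fun l : Fin M => chan l = i),
            ω j * (φ j (y l.castSucc) / (∑ j' ∈ I i, ω j' * φ j' (y l.castSucc))) := by
          refine Finset.sum_congr rfl fun j hj => ?_
          rw [h1 j hj, Finset.mul_sum]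
      _ = ∑ l ∈ univ.filter (fun l : Fin M => chan l = i), ∑ j ∈ I i,
            ω j * (φ j (y l.castSucc) / (∑ j' ∈ I i, ω j' * φ j' (y l.castSucc))) :=
          Finset.sum_comm
      _ = ∑ l ∈ univ.filter (fun l : Fin M => chan l = i), (1 : ℝ) := by
          refine Finset.sum_congr rfl fun l hl => ?_
          have hcl : chan l = i := (Finset.mem_filter.mp hl).2
          have hpos : 0 < ∑ j' ∈ I i, ω j' * φ j' (y l.castSucc) := by
            have := hω l; rwa [hcl] at this
          have hne := hpos.ne'
          rw [show (∑ j ∈ I i,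
              ω j * (φ j (y l.castSucc) / (∑ j' ∈ I i, ω j' * φ j' (y l.castSucc))))
              = (∑ j ∈ I i, ω j * φ j (y l.castSucc)) / (∑ j' ∈ I i, ω j' * φ j' (y l.castSucc))
            from by rw [Finset.sum_div]; exact Finset.sum_congr rfl fun j _ => by ring]
          exact div_self hne
      _ = ((univ.filter (fun l : Fin M => chan l = i)).card : ℝ) := by
          simp
  have swap : ∑ l : Fin (M+1), t l * ∑ j : Fin N, ω j * φ j (y l)
      = ∑ j : Fin N, ω j * ∑ l : Fin (M+1), t l * φ j (y l) := by
    simp_rw [Finset.mul_sum]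
    rw [Finset.sum_comm]
    exact Finset.sum_congr rfl fun j _ => Finset.sum_congr rfl fun l _ => by ring
  have hIfil : ∀ i : Fin K, I i = univ.filter (fun j => σ j = i) := by
    intro i
    ext j
    simp only [mem_filter, mem_univ, true_and]
    exact ⟨fun hj => (huniq j i hj).symm, fun hj => hj ▸ hmem j⟩
  have fib : ∑ j : Fin N, ω j * ∑ l : Fin (M+1), t l * φ j (y l)
      = ∑ i : Fin K, ∑ j ∈ I i, ω j * ∑ l : Fin (M+1), t l * φ j (y l) := by
    simp_rw [hIfil]
    exact (Finset.sum_fiberwise univ σ _).symm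
  have hcard : ∑ i : Fin K, ((univ.filter (fun l : Fin M => chan l = i)).card : ℝ) = (M : ℝ) := by
    have h := Finset.sum_fiberwise (univ : Finset (Fin M)) chan (fun _ => (1 : ℝ))
    simpa using h
  rw [swap, fib, Finset.sum_congr rfl fun i _ => key i, hcard]
end

section
/- Let ε > 0 and c > 0. Then: (i) for every x ≥ c, G_ε'(x)·(1 − G₀(x)/G_ε(x)) < (ε/c)·exp(−c/ε); (ii) for every x ≤ −c, G_ε'(x)·(1 − G₀(x)/G_ε(x)) < exp(−c/ε); (iii) for every x with |x| ≥ c, G_ε''(x) < (1/ε)·exp(−c/ε). -/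
/-- The first derivative of `G_ε`: `G_ε'(x) = exp(x/ε) / (1 + exp(x/ε))`. -/
noncomputable def GepsDeriv (ε x : ℝ) : ℝ := Real.exp (x / ε) / (1 + Real.exp (x / ε))

/-- The second derivative of `G_ε`: `G_ε''(x) = (1/ε) · exp(x/ε) / (1 + exp(x/ε))²`. -/
noncomputable def GepsDeriv2 (ε x : ℝ) : ℝ :=
  (1 / ε) * Real.exp (x / ε) / (1 + Real.exp (x / ε)) ^ 2

/-- `G₀(x) = max(x, 0)`. -/
noncomputable def Gzero (x : ℝ) : ℝ := max x 0

/-- Let `ε > 0` and `c > 0`. Then: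
(i) for every `x ≥ c`, `G_ε'(x)·(1 − G₀(x)/G_ε(x)) < (ε/c)·exp(−c/ε)`;
(ii) for every `x ≤ −c`, `G_ε'(x)·(1 − G₀(x)/G_ε(x)) < exp(−c/ε)`;
(iii) for every `x` with `|x| ≥ c`, `G_ε''(x) < (1/ε)·exp(−c/ε)`. -/
theorem geps_tail_estimates (ε c : ℝ) (hε : 0 < ε) (hc : 0 < c) :
    (∀ x : ℝ, c ≤ x →
        GepsDeriv ε x * (1 - Gzero x / Geps ε x) < (ε / c) * Real.exp (-c / ε)) ∧
      (∀ x : ℝ, x ≤ -c →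
        GepsDeriv ε x * (1 - Gzero x / Geps ε x) < Real.exp (-c / ε)) ∧
      (∀ x : ℝ, c ≤ |x| → GepsDeriv2 ε x < (1 / ε) * Real.exp (-c / ε)) := by
  have hE : 0 < Real.exp (-c / ε) := Real.exp_pos _
  refine ⟨?_, ?_, ?_⟩
  · -- (i)
    intro x hx
    have hxpos : 0 < x := lt_of_lt_of_le hc hx
    have he : 0 < Real.exp (x / ε) := Real.exp_pos _
    set e := Real.exp (x / ε) with he_def
    have hG0 : Gzero x = x := max_eq_left hxpos.le
    have hlog : x / ε < Real.log (1 + e) := by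
      have h1 : Real.log e < Real.log (1 + e) := Real.log_lt_log he (by linarith)
      rwa [he_def, Real.log_exp] at h1
    have hGgt : x < Geps ε x := by
      have h := mul_lt_mul_of_pos_left hlog hε
      have hxx : ε * (x / ε) = x := by field_simp
      rw [Geps, ← he_def]
      linarith
    have hGc : c < Geps ε x := lt_of_le_of_lt hx hGgt
    have hGpos : 0 < Geps ε x := lt_trans hxpos hGgt
    -- G - x = ε * log(1 + exp(-(x/ε)))
    have hdiff : Geps ε x - x = ε * Real.log (1 + Real.exp (-(x / ε))) := by
      rw [Geps]
      have h2 : Real.log (1 + Real.exp (-(x / ε))) = Real.log (1 + e) - x / ε := by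
        rw [Real.exp_neg, ← he_def]
        have : (1 : ℝ) + e⁻¹ = (1 + e) / e := by field_simp; ring
        rw [this, Real.log_div (by positivity) (ne_of_gt he), he_def, Real.log_exp]
      rw [h2, mul_sub]
      have hxx : ε * (x / ε) = x := by field_simp
      rw [hxx]
    have hylt : Real.log (1 + Real.exp (-(x / ε))) < Real.exp (-(x / ε)) := by
      set y := Real.exp (-(x / ε)) with hy_def
      have hy : 0 < y := Real.exp_pos _
      have h3 : y + 1 < Real.exp y := Real.add_one_lt_exp (ne_of_gt hy)
      have h4 : Real.log (1 + y) < Real.log (Real.exp y) :=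
        Real.log_lt_log (by linarith) (by linarith)
      rwa [Real.log_exp] at h4
    have hexple : Real.exp (-(x / ε)) ≤ Real.exp (-c / ε) := by
      apply Real.exp_le_exp.mpr
      rw [neg_div]
      apply neg_le_neg
      gcongr
    have hdlt : Geps ε x - x < ε * Real.exp (-c / ε) := by
      rw [hdiff]
      calc ε * Real.log (1 + Real.exp (-(x / ε)))
          < ε * Real.exp (-(x / ε)) := mul_lt_mul_of_pos_left hylt hε
        _ ≤ ε * Real.exp (-c / ε) := mul_le_mul_of_nonneg_left hexple hε.le
    have hone : 1 - Gzero x / Geps ε x = (Geps ε x - x) / Geps ε x := by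
      rw [hG0]
      field_simp
    rw [hone]
    have hDlt1 : GepsDeriv ε x ≤ 1 := by
      rw [GepsDeriv]
      exact le_of_lt ((div_lt_one (by linarith)).mpr (by linarith))
    have hfrac_nonneg : 0 ≤ (Geps ε x - x) / Geps ε x :=
      div_nonneg (by linarith) hGpos.le
    have h5 : GepsDeriv ε x * ((Geps ε x - x) / Geps ε x) ≤ (Geps ε x - x) / Geps ε x :=
      mul_le_of_le_one_left hfrac_nonneg hDlt1
    have h6 : (Geps ε x - x) / Geps ε x < (ε * Real.exp (-c / ε)) / c :=
      div_lt_div₀ hdlt hGc.le (by positivity) hc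
    calc GepsDeriv ε x * ((Geps ε x - x) / Geps ε x)
        ≤ (Geps ε x - x) / Geps ε x := h5
      _ < (ε * Real.exp (-c / ε)) / c := h6
      _ = (ε / c) * Real.exp (-c / ε) := by ring
  · -- (ii)
    intro x hx
    have hxneg : x < 0 := lt_of_le_of_lt hx (by linarith)
    have hG0 : Gzero x = 0 := max_eq_right hxneg.le
    have he : 0 < Real.exp (x / ε) := Real.exp_pos _
    rw [hG0, zero_div, sub_zero, mul_one, GepsDeriv]
    have h1 : Real.exp (x / ε) / (1 + Real.exp (x / ε)) < Real.exp (x / ε) :=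
      div_lt_self he (by linarith)
    have h2 : Real.exp (x / ε) ≤ Real.exp (-c / ε) :=
      Real.exp_le_exp.mpr (by gcongr)
    exact lt_of_lt_of_le h1 h2
  · -- (iii)
    intro x hx
    have he : 0 < Real.exp (x / ε) := Real.exp_pos _
    set e := Real.exp (x / ε) with he_def
    have key : e / (1 + e) ^ 2 < Real.exp (-c / ε) := by
      rcases le_abs.mp hx with h | h
      · -- c ≤ x
        have h1 : e / (1 + e) ^ 2 < e / e ^ 2 := by
          apply div_lt_div_of_pos_left he (by positivity)
          nlinarith
        have h2 : e / e ^ 2 = Real.exp (-(x / ε)) := by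
          rw [Real.exp_neg, ← he_def]
          field_simp
        have h3 : Real.exp (-(x / ε)) ≤ Real.exp (-c / ε) := by
          apply Real.exp_le_exp.mpr
          rw [neg_div]
          exact neg_le_neg (by gcongr)
        rw [h2] at h1
        exact lt_of_lt_of_le h1 h3
      · -- c ≤ -x, i.e. x ≤ -c
        have hx' : x ≤ -c := by linarith
        have h1 : e / (1 + e) ^ 2 < e := by
          rw [div_lt_iff₀ (by positivity)]
          nlinarith [mul_pos he he, mul_pos (mul_pos he he) he]
        have h2 : e ≤ Real.exp (-c / ε) := by
          rw [he_def]
          exact Real.exp_le_exp.mpr (by gcongr)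
        exact lt_of_lt_of_le h1 h2
    rw [GepsDeriv2, mul_div_assoc]
    exact mul_lt_mul_of_pos_left key (by positivity)
end
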